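/- arXiv:math/0008153 — 3 statements merged into one kernel-verified Lean document; each statement's English description precedes it below -/
import Mathlib

section
/- Miura map for the MKdV equation (Proposition 2-2): Let q : ℝ × ℝ → ℝ, (s,t) ↦ q(s,t), be a smooth function, and define p₊ := q² + ∂_s q and p₋ := q² − ∂_s q. If both p₊ and p₋ satisfy the KdV equation ∂_t p + 6 p ∂_s p + ∂_s³ p = 0 at every point of ℝ², then q satisfies the modified KdV equation ∂_t q + 6 q² ∂_s q + ∂_s³ q = 0 at every point of ℝ². -/
set_option maxHeartbeats 1000000

noncomputable section

/-- Partial derivative in the first ("space", `s`) variable. -/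
def pdS (f : ℝ × ℝ → ℝ) (u : ℝ × ℝ) : ℝ := deriv (fun x => f (x, u.2)) u.1

/-- Partial derivative in the second ("time", `t`) variable. -/
def pdT (f : ℝ × ℝ → ℝ) (u : ℝ × ℝ) : ℝ := deriv (fun y => f (u.1, y)) u.2

namespace Miura
variable {f g : ℝ × ℝ → ℝ}
lemma contDiff_sliceS (hf : ContDiff ℝ (⊤ : ℕ∞) f) (b : ℝ) : ContDiff ℝ (⊤ : ℕ∞) (fun x : ℝ => f (x, b)) :=
  hf.comp (contDiff_id.prodMk contDiff_const)
lemma contDiff_sliceT (hf : ContDiff ℝ (⊤ : ℕ∞) f) (a : ℝ) : ContDiff ℝ (⊤ : ℕ∞) (fun y : ℝ => f (a, y)) :=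
  hf.comp (contDiff_const.prodMk contDiff_id)
lemma diffAt_sliceS (hf : ContDiff ℝ (⊤ : ℕ∞) f) (a b : ℝ) :
    DifferentiableAt ℝ (fun x : ℝ => f (x, b)) a :=
  ((contDiff_sliceS hf b).differentiable (by simp)) a
lemma diffAt_sliceT (hf : ContDiff ℝ (⊤ : ℕ∞) f) (a b : ℝ) :
    DifferentiableAt ℝ (fun y : ℝ => f (a, y)) b :=
  ((contDiff_sliceT hf a).differentiable (by simp)) b
lemma hasDerivAt_sliceS (hf : ContDiff ℝ (⊤ : ℕ∞) f) (a b : ℝ) :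
    HasDerivAt (fun x : ℝ => f (x, b)) (pdS f (a, b)) a :=
  (diffAt_sliceS hf a b).hasDerivAt
lemma hasDerivAt_sliceT (hf : ContDiff ℝ (⊤ : ℕ∞) f) (a b : ℝ) :
    HasDerivAt (fun y : ℝ => f (a, y)) (pdT f (a, b)) b :=
  (diffAt_sliceT hf a b).hasDerivAt
lemma pdS_eq_fderiv {u : ℝ × ℝ} (hf : DifferentiableAt ℝ f u) :
    pdS f u = fderiv ℝ f u (1, 0) := by
  have h1 : HasDerivAt (fun x : ℝ => (x, u.2)) ((1 : ℝ), (0 : ℝ)) u.1 :=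
    (hasDerivAt_id u.1).prodMk (hasDerivAt_const u.1 u.2)
  have h2 : HasDerivAt (fun x : ℝ => f (x, u.2)) (fderiv ℝ f u (1, 0)) u.1 := by
    have := hf.hasFDerivAt.comp_hasDerivAt u.1 h1
    exact this
  exact h2.deriv
lemma pdT_eq_fderiv {u : ℝ × ℝ} (hf : DifferentiableAt ℝ f u) :
    pdT f u = fderiv ℝ f u (0, 1) := by
  have h1 : HasDerivAt (fun y : ℝ => (u.1, y)) ((0 : ℝ), (1 : ℝ)) u.2 :=
    (hasDerivAt_const u.2 u.1).prodMk (hasDerivAt_id u.2)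
  have h2 : HasDerivAt (fun y : ℝ => f (u.1, y)) (fderiv ℝ f u (0, 1)) u.2 := by
    have := hf.hasFDerivAt.comp_hasDerivAt u.2 h1
    exact this
  exact h2.deriv
lemma contDiff_pdS (hf : ContDiff ℝ (⊤ : ℕ∞) f) : ContDiff ℝ (⊤ : ℕ∞) (pdS f) := by
  have h1 : ContDiff ℝ (⊤ : ℕ∞) (fun u => fderiv ℝ f u (1, 0)) :=
    (hf.fderiv_right (by simp)).clm_apply contDiff_const
  have h2 : pdS f = fun u => fderiv ℝ f u (1, 0) := by
    funext u; exact pdS_eq_fderiv ((hf.differentiable (by simp)) u)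
  rw [h2]; exact h1
lemma contDiff_pdT (hf : ContDiff ℝ (⊤ : ℕ∞) f) : ContDiff ℝ (⊤ : ℕ∞) (pdT f) := by
  have h1 : ContDiff ℝ (⊤ : ℕ∞) (fun u => fderiv ℝ f u (0, 1)) :=
    (hf.fderiv_right (by simp)).clm_apply contDiff_const
  have h2 : pdT f = fun u => fderiv ℝ f u (0, 1) := by
    funext u; exact pdT_eq_fderiv ((hf.differentiable (by simp)) u)
  rw [h2]; exact h1
lemma pdS_pdT_comm (hf : ContDiff ℝ (⊤ : ℕ∞) f) (u : ℝ × ℝ) :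
    pdS (pdT f) u = pdT (pdS f) u := by
  have hdf : Differentiable ℝ f := hf.differentiable (by simp)
  have hf' : ContDiff ℝ (⊤ : ℕ∞) (fderiv ℝ f) := hf.fderiv_right (by simp)
  have hd' : Differentiable ℝ (fderiv ℝ f) := hf'.differentiable (by simp)
  have hfd : ∀ y, HasFDerivAt f (fderiv ℝ f y) y := fun y => (hdf y).hasFDerivAt
  have hx : HasFDerivAt (fderiv ℝ f) (fderiv ℝ (fderiv ℝ f) u) u := (hd' u).hasFDerivAt
  have hsymm := second_derivative_symmetric hfd hx
  have e1 : pdT f = fun v => fderiv ℝ f v (0, 1) := by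
    funext v; exact pdT_eq_fderiv (hdf v)
  have e2 : pdS f = fun v => fderiv ℝ f v (1, 0) := by
    funext v; exact pdS_eq_fderiv (hdf v)
  have hT1 : ContDiff ℝ (⊤ : ℕ∞) (pdT f) := contDiff_pdT hf
  have hS1 : ContDiff ℝ (⊤ : ℕ∞) (pdS f) := contDiff_pdS hf
  have hA : pdS (pdT f) u = fderiv ℝ (pdT f) u (1, 0) :=
    pdS_eq_fderiv ((hT1.differentiable (by simp)) u)
  have hB : pdT (pdS f) u = fderiv ℝ (pdS f) u (0, 1) :=
    pdT_eq_fderiv ((hS1.differentiable (by simp)) u)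
  have key : ∀ w v0 : ℝ × ℝ,
      fderiv ℝ (fun v => fderiv ℝ f v w) u v0 = fderiv ℝ (fderiv ℝ f) u v0 w := by
    intro w v0
    have h := hx.clm_apply (hasFDerivAt_const w u)
    rw [h.fderiv]
    simp
  rw [hA, hB, e1, e2, key (0, 1) (1, 0), key (1, 0) (0, 1)]
  exact hsymm _ _
lemma pdS_congr (h : ∀ v, f v = g v) (u : ℝ × ℝ) : pdS f u = pdS g u := by
  unfold pdS; congr 1; funext x; exact h (x, u.2)
lemma pdT_congr (h : ∀ v, f v = g v) (u : ℝ × ℝ) : pdT f u = pdT g u := by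
  unfold pdT; congr 1; funext y; exact h (u.1, y)
lemma pdT_zero_fun (u : ℝ × ℝ) : pdT (fun _ => (0 : ℝ)) u = 0 := by simp [pdT]

variable (q : ℝ × ℝ → ℝ)
def QT : ℝ × ℝ → ℝ := pdT q
def Q1 : ℝ × ℝ → ℝ := pdS q
def Q2 : ℝ × ℝ → ℝ := pdS (Q1 q)
def Q3 : ℝ × ℝ → ℝ := pdS (Q2 q)
def Q4 : ℝ × ℝ → ℝ := pdS (Q3 q)
def Q5 : ℝ × ℝ → ℝ := pdS (Q4 q)
def Q6 : ℝ × ℝ → ℝ := pdS (Q5 q)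
def Q7 : ℝ × ℝ → ℝ := pdS (Q6 q)
def MF : ℝ × ℝ → ℝ := fun u => QT q u + 6 * (q u) ^ 2 * Q1 q u + Q3 q u
def MT : ℝ × ℝ → ℝ := pdT (MF q)
def N1f : ℝ × ℝ → ℝ := fun u =>
  12 * q u * (Q1 q u) ^ 2 + 6 * (q u) ^ 2 * Q2 q u + Q4 q u
def N2f : ℝ × ℝ → ℝ := fun u =>
  12 * (Q1 q u) ^ 3 + 36 * q u * Q1 q u * Q2 q u + 6 * (q u) ^ 2 * Q3 q u + Q5 q u
def N3f : ℝ × ℝ → ℝ := fun u =>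
  72 * (Q1 q u) ^ 2 * Q2 q u + 36 * q u * (Q2 q u) ^ 2 + 48 * q u * Q1 q u * Q3 q u +
    6 * (q u) ^ 2 * Q4 q u + Q6 q u
def N4f : ℝ × ℝ → ℝ := fun u =>
  180 * Q1 q u * (Q2 q u) ^ 2 + 120 * (Q1 q u) ^ 2 * Q3 q u + 120 * q u * Q2 q u * Q3 q u +
    60 * q u * Q1 q u * Q4 q u + 6 * (q u) ^ 2 * Q5 q u + Q7 q u

variable {q} (hq : ContDiff ℝ (⊤ : ℕ∞) q)

section Derivation
include hq

lemma smQT : ContDiff ℝ (⊤ : ℕ∞) (QT q) := contDiff_pdT hq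
lemma smQ1 : ContDiff ℝ (⊤ : ℕ∞) (Q1 q) := contDiff_pdS hq
lemma smQ2 : ContDiff ℝ (⊤ : ℕ∞) (Q2 q) := contDiff_pdS (smQ1 hq)
lemma smQ3 : ContDiff ℝ (⊤ : ℕ∞) (Q3 q) := contDiff_pdS (smQ2 hq)
lemma smQ4 : ContDiff ℝ (⊤ : ℕ∞) (Q4 q) := contDiff_pdS (smQ3 hq)
lemma smQ5 : ContDiff ℝ (⊤ : ℕ∞) (Q5 q) := contDiff_pdS (smQ4 hq)
lemma smQ6 : ContDiff ℝ (⊤ : ℕ∞) (Q6 q) := contDiff_pdS (smQ5 hq)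
lemma smMF : ContDiff ℝ (⊤ : ℕ∞) (MF q) := by
  unfold MF
  exact ((smQT hq).add ((contDiff_const.mul (hq.pow 2)).mul (smQ1 hq))).add (smQ3 hq)
lemma smMT : ContDiff ℝ (⊤ : ℕ∞) (MT q) := contDiff_pdT (smMF hq)
lemma smN1f : ContDiff ℝ (⊤ : ℕ∞) (N1f q) := by
  unfold N1f
  exact (((contDiff_const.mul hq).mul ((smQ1 hq).pow 2)).add
    ((contDiff_const.mul (hq.pow 2)).mul (smQ2 hq))).add (smQ4 hq)
lemma smN2f : ContDiff ℝ (⊤ : ℕ∞) (N2f q) := by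
  unfold N2f
  exact (((contDiff_const.mul ((smQ1 hq).pow 3)).add
    (((contDiff_const.mul hq).mul (smQ1 hq)).mul (smQ2 hq))).add
    ((contDiff_const.mul (hq.pow 2)).mul (smQ3 hq))).add (smQ5 hq)
lemma smN3f : ContDiff ℝ (⊤ : ℕ∞) (N3f q) := by
  unfold N3f
  exact (((((contDiff_const.mul ((smQ1 hq).pow 2)).mul (smQ2 hq)).add
    ((contDiff_const.mul hq).mul ((smQ2 hq).pow 2))).add
    (((contDiff_const.mul hq).mul (smQ1 hq)).mul (smQ3 hq))).add
    ((contDiff_const.mul (hq.pow 2)).mul (smQ4 hq))).add (smQ6 hq)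

/-- pdS of N1f is N2f -/
lemma pdS_N1f : ∀ u, pdS (N1f q) u = N2f q u := by
  rintro ⟨a, b⟩
  have hD : HasDerivAt (fun x : ℝ => N1f q (x, b))
      ((12 * Q1 q (a,b) * Q1 q (a,b) ^ 2 + 12 * q (a,b) * (2 * Q1 q (a,b) ^ 1 * Q2 q (a,b))
        + (6 * (2 * q (a,b) ^ 1 * Q1 q (a,b)) * Q2 q (a,b)
            + 6 * q (a,b) ^ 2 * Q3 q (a,b)))
        + Q5 q (a,b)) a := by
    exact ((((hasDerivAt_sliceS hq a b).const_mul 12).mul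
        ((hasDerivAt_sliceS (smQ1 hq) a b).pow 2)).add
      ((((hasDerivAt_sliceS hq a b).pow 2).const_mul 6).mul
        (hasDerivAt_sliceS (smQ2 hq) a b))).add (hasDerivAt_sliceS (smQ4 hq) a b)
  have h := hD.deriv
  show deriv (fun x => N1f q (x, b)) a = _
  rw [h]; unfold N2f; ring

/-- pdS of N2f is N3f -/
lemma pdS_N2f : ∀ u, pdS (N2f q) u = N3f q u := by
  rintro ⟨a, b⟩
  have hD : HasDerivAt (fun x : ℝ => N2f q (x, b))
      (((12 * (3 * Q1 q (a,b) ^ 2 * Q2 q (a,b))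
        + ((36 * Q1 q (a,b) * Q1 q (a,b) + 36 * q (a,b) * Q2 q (a,b)) * Q2 q (a,b)
            + 36 * q (a,b) * Q1 q (a,b) * Q3 q (a,b)))
        + (6 * (2 * q (a,b) ^ 1 * Q1 q (a,b)) * Q3 q (a,b)
            + 6 * q (a,b) ^ 2 * Q4 q (a,b)))
        + Q6 q (a,b)) a := by
    exact (((((hasDerivAt_sliceS (smQ1 hq) a b).pow 3).const_mul 12).add
      ((((hasDerivAt_sliceS hq a b).const_mul 36).mul
          (hasDerivAt_sliceS (smQ1 hq) a b)).mul (hasDerivAt_sliceS (smQ2 hq) a b))).add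
      ((((hasDerivAt_sliceS hq a b).pow 2).const_mul 6).mul
        (hasDerivAt_sliceS (smQ3 hq) a b))).add (hasDerivAt_sliceS (smQ5 hq) a b)
  have h := hD.deriv
  show deriv (fun x => N2f q (x, b)) a = _
  rw [h]; unfold N3f; ring

/-- pdS of N3f is N4f -/
lemma pdS_N3f : ∀ u, pdS (N3f q) u = N4f q u := by
  rintro ⟨a, b⟩
  have hD : HasDerivAt (fun x : ℝ => N3f q (x, b))
      (((((72 * (2 * Q1 q (a,b) ^ 1 * Q2 q (a,b)) * Q2 q (a,b)
          + 72 * Q1 q (a,b) ^ 2 * Q3 q (a,b))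
        + (36 * Q1 q (a,b) * Q2 q (a,b) ^ 2
            + 36 * q (a,b) * (2 * Q2 q (a,b) ^ 1 * Q3 q (a,b))))
        + ((48 * Q1 q (a,b) * Q1 q (a,b) + 48 * q (a,b) * Q2 q (a,b)) * Q3 q (a,b)
            + 48 * q (a,b) * Q1 q (a,b) * Q4 q (a,b)))
        + (6 * (2 * q (a,b) ^ 1 * Q1 q (a,b)) * Q4 q (a,b)
            + 6 * q (a,b) ^ 2 * Q5 q (a,b)))
        + Q7 q (a,b)) a := by
    have hA := (((hasDerivAt_sliceS (smQ1 hq) a b).pow 2).const_mul 72).mul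
      (hasDerivAt_sliceS (smQ2 hq) a b)
    have hB := ((hasDerivAt_sliceS hq a b).const_mul 36).mul
      ((hasDerivAt_sliceS (smQ2 hq) a b).pow 2)
    have hC := (((hasDerivAt_sliceS hq a b).const_mul 48).mul
      (hasDerivAt_sliceS (smQ1 hq) a b)).mul (hasDerivAt_sliceS (smQ3 hq) a b)
    have hDd := (((hasDerivAt_sliceS hq a b).pow 2).const_mul 6).mul
      (hasDerivAt_sliceS (smQ4 hq) a b)
    exact (((hA.add hB).add hC).add hDd).add (hasDerivAt_sliceS (smQ6 hq) a b)
  have h := hD.deriv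
  show deriv (fun x => N3f q (x, b)) a = _
  rw [h]; unfold N4f; ring


end Derivation

lemma pdS_neg {f : ℝ × ℝ → ℝ} (hf : ContDiff ℝ (⊤ : ℕ∞) f) (u : ℝ × ℝ) :
    pdS (fun v => -f v) u = -pdS f u :=
  ((hasDerivAt_sliceS hf u.1 u.2).neg).deriv

section Master
include hq

/-- All the pointwise differential identities we need. -/
lemma master (pPlus pMinus : ℝ × ℝ → ℝ)
    (hpPlus : pPlus = fun u => (q u) ^ 2 + pdS q u)
    (hpMinus : pMinus = fun u => (q u) ^ 2 - pdS q u)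
    (hKdVPlus : ∀ u : ℝ × ℝ,
      pdT pPlus u + 6 * pPlus u * pdS pPlus u + pdS (pdS (pdS pPlus)) u = 0)
    (hKdVMinus : ∀ u : ℝ × ℝ,
      pdT pMinus u + 6 * pMinus u * pdS pMinus u + pdS (pdS (pdS pMinus)) u = 0) :
    (∀ u, pdS (MF q) u = 0) ∧
    (∀ u, q u * MF q u + 6 * (Q1 q u * Q2 q u) = 0) ∧
    (∀ u, Q1 q u * MF q u + 6 * ((Q2 q u) ^ 2 + Q1 q u * Q3 q u) = 0) ∧
    (∀ u, Q2 q u * MF q u + 6 * (3 * Q2 q u * Q3 q u + Q1 q u * Q4 q u) = 0) ∧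
    (∀ u, Q3 q u * MF q u + 6 * (3 * (Q3 q u) ^ 2 + 4 * Q2 q u * Q4 q u + Q1 q u * Q5 q u) = 0) ∧
    (∀ u, Q4 q u * MF q u +
      6 * (10 * Q3 q u * Q4 q u + 5 * Q2 q u * Q5 q u + Q1 q u * Q6 q u) = 0) ∧
    (∀ u, Q5 q u * MF q u +
      6 * (10 * (Q4 q u) ^ 2 + 15 * Q3 q u * Q5 q u + 6 * Q2 q u * Q6 q u + Q1 q u * Q7 q u)
        = 0) ∧
    (∀ u, QT q u * MF q u + q u * MT q u
      - 6 * (N1f q u * Q2 q u + Q1 q u * N2f q u) = 0) ∧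
    (∀ u, -(N2f q u * MF q u) + Q2 q u * MT q u
      - 6 * (3 * Q2 q u * N3f q u + 3 * Q3 q u * N2f q u + Q4 q u * N1f q u
          + Q1 q u * N4f q u) = 0) := by
  -- first spatial derivatives of pPlus, pMinus
  have hSP : ∀ u : ℝ × ℝ, pdS pPlus u = 2 * q u * Q1 q u + Q2 q u := by
    rintro ⟨a, b⟩
    have hD : HasDerivAt (fun x : ℝ => pPlus (x, b))
        (2 * q (a, b) ^ 1 * Q1 q (a, b) + Q2 q (a, b)) a := by
      rw [hpPlus]
      exact ((hasDerivAt_sliceS hq a b).pow 2).add (hasDerivAt_sliceS (smQ1 hq) a b)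
    have h := hD.deriv
    show deriv (fun x => pPlus (x, b)) a = _
    rw [h]; ring
  have hSM : ∀ u : ℝ × ℝ, pdS pMinus u = 2 * q u * Q1 q u - Q2 q u := by
    rintro ⟨a, b⟩
    have hD : HasDerivAt (fun x : ℝ => pMinus (x, b))
        (2 * q (a, b) ^ 1 * Q1 q (a, b) - Q2 q (a, b)) a := by
      rw [hpMinus]
      exact ((hasDerivAt_sliceS hq a b).pow 2).sub (hasDerivAt_sliceS (smQ1 hq) a b)
    have h := hD.deriv
    show deriv (fun x => pMinus (x, b)) a = _
    rw [h]; ring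
  have hSSP : ∀ u : ℝ × ℝ,
      pdS (pdS pPlus) u = 2 * (Q1 q u) ^ 2 + 2 * q u * Q2 q u + Q3 q u := by
    rintro ⟨a, b⟩
    have e : (fun x : ℝ => pdS pPlus (x, b)) =
        (fun x : ℝ => 2 * q (x, b) * Q1 q (x, b) + Q2 q (x, b)) := by
      funext x; exact hSP (x, b)
    have hD : HasDerivAt (fun x : ℝ => pdS pPlus (x, b))
        ((2 * Q1 q (a, b) * Q1 q (a, b) + 2 * q (a, b) * Q2 q (a, b)) + Q3 q (a, b)) a := by
      rw [e]
      exact (((hasDerivAt_sliceS hq a b).const_mul 2).mul (hasDerivAt_sliceS (smQ1 hq) a b)).add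
        (hasDerivAt_sliceS (smQ2 hq) a b)
    have h := hD.deriv
    show deriv (fun x => pdS pPlus (x, b)) a = _
    rw [h]; ring
  have hSSM : ∀ u : ℝ × ℝ,
      pdS (pdS pMinus) u = 2 * (Q1 q u) ^ 2 + 2 * q u * Q2 q u - Q3 q u := by
    rintro ⟨a, b⟩
    have e : (fun x : ℝ => pdS pMinus (x, b)) =
        (fun x : ℝ => 2 * q (x, b) * Q1 q (x, b) - Q2 q (x, b)) := by
      funext x; exact hSM (x, b)
    have hD : HasDerivAt (fun x : ℝ => pdS pMinus (x, b))
        ((2 * Q1 q (a, b) * Q1 q (a, b) + 2 * q (a, b) * Q2 q (a, b)) - Q3 q (a, b)) a := by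
      rw [e]
      exact (((hasDerivAt_sliceS hq a b).const_mul 2).mul (hasDerivAt_sliceS (smQ1 hq) a b)).sub
        (hasDerivAt_sliceS (smQ2 hq) a b)
    have h := hD.deriv
    show deriv (fun x => pdS pMinus (x, b)) a = _
    rw [h]; ring
  have hSSSP : ∀ u : ℝ × ℝ,
      pdS (pdS (pdS pPlus)) u = 6 * Q1 q u * Q2 q u + 2 * q u * Q3 q u + Q4 q u := by
    rintro ⟨a, b⟩
    have e : (fun x : ℝ => pdS (pdS pPlus) (x, b)) =
        (fun x : ℝ => 2 * (Q1 q (x, b)) ^ 2 + 2 * q (x, b) * Q2 q (x, b) + Q3 q (x, b)) := by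
      funext x; exact hSSP (x, b)
    have hD : HasDerivAt (fun x : ℝ => pdS (pdS pPlus) (x, b))
        ((2 * (2 * Q1 q (a, b) ^ 1 * Q2 q (a, b))
          + (2 * Q1 q (a, b) * Q2 q (a, b) + 2 * q (a, b) * Q3 q (a, b))) + Q4 q (a, b)) a := by
      rw [e]
      exact ((((hasDerivAt_sliceS (smQ1 hq) a b).pow 2).const_mul 2).add
        (((hasDerivAt_sliceS hq a b).const_mul 2).mul (hasDerivAt_sliceS (smQ2 hq) a b))).add
        (hasDerivAt_sliceS (smQ3 hq) a b)
    have h := hD.deriv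
    show deriv (fun x => pdS (pdS pPlus) (x, b)) a = _
    rw [h]; ring
  have hSSSM : ∀ u : ℝ × ℝ,
      pdS (pdS (pdS pMinus)) u = 6 * Q1 q u * Q2 q u + 2 * q u * Q3 q u - Q4 q u := by
    rintro ⟨a, b⟩
    have e : (fun x : ℝ => pdS (pdS pMinus) (x, b)) =
        (fun x : ℝ => 2 * (Q1 q (x, b)) ^ 2 + 2 * q (x, b) * Q2 q (x, b) - Q3 q (x, b)) := by
      funext x; exact hSSM (x, b)
    have hD : HasDerivAt (fun x : ℝ => pdS (pdS pMinus) (x, b))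
        ((2 * (2 * Q1 q (a, b) ^ 1 * Q2 q (a, b))
          + (2 * Q1 q (a, b) * Q2 q (a, b) + 2 * q (a, b) * Q3 q (a, b))) - Q4 q (a, b)) a := by
      rw [e]
      exact ((((hasDerivAt_sliceS (smQ1 hq) a b).pow 2).const_mul 2).add
        (((hasDerivAt_sliceS hq a b).const_mul 2).mul (hasDerivAt_sliceS (smQ2 hq) a b))).sub
        (hasDerivAt_sliceS (smQ3 hq) a b)
    have h := hD.deriv
    show deriv (fun x => pdS (pdS pMinus) (x, b)) a = _
    rw [h]; ring
  have hTP : ∀ u : ℝ × ℝ, pdT pPlus u = 2 * q u * QT q u + pdT (Q1 q) u := by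
    rintro ⟨a, b⟩
    have hD : HasDerivAt (fun y : ℝ => pPlus (a, y))
        (2 * q (a, b) ^ 1 * QT q (a, b) + pdT (Q1 q) (a, b)) b := by
      rw [hpPlus]
      exact ((hasDerivAt_sliceT hq a b).pow 2).add (hasDerivAt_sliceT (smQ1 hq) a b)
    have h := hD.deriv
    show deriv (fun y => pPlus (a, y)) b = _
    rw [h]; ring
  have hTM : ∀ u : ℝ × ℝ, pdT pMinus u = 2 * q u * QT q u - pdT (Q1 q) u := by
    rintro ⟨a, b⟩
    have hD : HasDerivAt (fun y : ℝ => pMinus (a, y))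
        (2 * q (a, b) ^ 1 * QT q (a, b) - pdT (Q1 q) (a, b)) b := by
      rw [hpMinus]
      exact ((hasDerivAt_sliceT hq a b).pow 2).sub (hasDerivAt_sliceT (smQ1 hq) a b)
    have h := hD.deriv
    show deriv (fun y => pMinus (a, y)) b = _
    rw [h]; ring
  -- the two fundamental identities
  have hE1 : ∀ u, pdT (Q1 q) u = -(N1f q u) := by
    intro u
    have hp := hKdVPlus u
    have hm := hKdVMinus u
    rw [hTP u, hSP u, hSSSP u] at hp
    rw [hTM u, hSM u, hSSSM u] at hm
    simp only [hpPlus, hpMinus] at hp hm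
    rw [show pdS q = Q1 q from rfl] at hp hm
    unfold N1f
    linear_combination (hp - hm) / 2
  have hR0 : ∀ u, q u * MF q u + 6 * (Q1 q u * Q2 q u) = 0 := by
    intro u
    have hp := hKdVPlus u
    have hm := hKdVMinus u
    rw [hTP u, hSP u, hSSSP u] at hp
    rw [hTM u, hSM u, hSSSM u] at hm
    simp only [hpPlus, hpMinus] at hp hm
    rw [show pdS q = Q1 q from rfl] at hp hm
    unfold MF
    linear_combination (hp + hm) / 4
  -- pdS M = 0
  have hMs : ∀ u, pdS (MF q) u = 0 := by
    rintro ⟨a, b⟩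
    have hD : HasDerivAt (fun x : ℝ => MF q (x, b))
        ((pdS (QT q) (a, b)
          + (6 * (2 * q (a, b) ^ 1 * Q1 q (a, b)) * Q1 q (a, b)
              + 6 * q (a, b) ^ 2 * Q2 q (a, b))) + Q4 q (a, b)) a := by
      exact ((hasDerivAt_sliceS (smQT hq) a b).add
        ((((hasDerivAt_sliceS hq a b).pow 2).const_mul 6).mul
          (hasDerivAt_sliceS (smQ1 hq) a b))).add (hasDerivAt_sliceS (smQ3 hq) a b)
    have h := hD.deriv
    show deriv (fun x => MF q (x, b)) a = 0
    rw [h]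
    have hc : pdS (QT q) (a, b) = -(N1f q (a, b)) := by
      rw [show QT q = pdT q from rfl, pdS_pdT_comm hq (a, b),
        show pdS q = Q1 q from rfl, hE1 (a, b)]
    rw [hc]; unfold N1f; ring
  -- R chain
  have hR1 : ∀ u, Q1 q u * MF q u + 6 * ((Q2 q u) ^ 2 + Q1 q u * Q3 q u) = 0 := by
    rintro ⟨a, b⟩
    have hzero : (fun x : ℝ => q (x, b) * MF q (x, b) + 6 * (Q1 q (x, b) * Q2 q (x, b)))
        = fun _ => (0 : ℝ) := by funext x; exact hR0 (x, b)
    have hD : HasDerivAt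
        (fun x : ℝ => q (x, b) * MF q (x, b) + 6 * (Q1 q (x, b) * Q2 q (x, b)))
        ((Q1 q (a, b) * MF q (a, b) + q (a, b) * pdS (MF q) (a, b))
          + 6 * (Q2 q (a, b) * Q2 q (a, b) + Q1 q (a, b) * Q3 q (a, b))) a := by
      exact ((hasDerivAt_sliceS hq a b).mul (hasDerivAt_sliceS (smMF hq) a b)).add
        (((hasDerivAt_sliceS (smQ1 hq) a b).mul
          (hasDerivAt_sliceS (smQ2 hq) a b)).const_mul 6)
    have h0 : HasDerivAt
        (fun x : ℝ => q (x, b) * MF q (x, b) + 6 * (Q1 q (x, b) * Q2 q (x, b))) 0 a := by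
      rw [hzero]; exact hasDerivAt_const a 0
    have hU := hD.unique h0
    linear_combination hU - q (a, b) * hMs (a, b)
  have hR2 : ∀ u, Q2 q u * MF q u + 6 * (3 * Q2 q u * Q3 q u + Q1 q u * Q4 q u) = 0 := by
    rintro ⟨a, b⟩
    have hzero : (fun x : ℝ =>
        Q1 q (x, b) * MF q (x, b) + 6 * ((Q2 q (x, b)) ^ 2 + Q1 q (x, b) * Q3 q (x, b)))
        = fun _ => (0 : ℝ) := by funext x; exact hR1 (x, b)
    have hD : HasDerivAt
        (fun x : ℝ =>
          Q1 q (x, b) * MF q (x, b) + 6 * ((Q2 q (x, b)) ^ 2 + Q1 q (x, b) * Q3 q (x, b)))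
        ((Q2 q (a, b) * MF q (a, b) + Q1 q (a, b) * pdS (MF q) (a, b))
          + 6 * ((2 * Q2 q (a, b) ^ 1 * Q3 q (a, b))
            + (Q2 q (a, b) * Q3 q (a, b) + Q1 q (a, b) * Q4 q (a, b)))) a := by
      exact ((hasDerivAt_sliceS (smQ1 hq) a b).mul (hasDerivAt_sliceS (smMF hq) a b)).add
        ((((hasDerivAt_sliceS (smQ2 hq) a b).pow 2).add
          ((hasDerivAt_sliceS (smQ1 hq) a b).mul
            (hasDerivAt_sliceS (smQ3 hq) a b))).const_mul 6)
    have h0 : HasDerivAt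
        (fun x : ℝ =>
          Q1 q (x, b) * MF q (x, b) + 6 * ((Q2 q (x, b)) ^ 2 + Q1 q (x, b) * Q3 q (x, b)))
        0 a := by rw [hzero]; exact hasDerivAt_const a 0
    have hU := hD.unique h0
    linear_combination hU - Q1 q (a, b) * hMs (a, b)
  have hR3 : ∀ u, Q3 q u * MF q u
      + 6 * (3 * (Q3 q u) ^ 2 + 4 * Q2 q u * Q4 q u + Q1 q u * Q5 q u) = 0 := by
    rintro ⟨a, b⟩
    have hzero : (fun x : ℝ =>
        Q2 q (x, b) * MF q (x, b)
          + 6 * (3 * Q2 q (x, b) * Q3 q (x, b) + Q1 q (x, b) * Q4 q (x, b)))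
        = fun _ => (0 : ℝ) := by funext x; exact hR2 (x, b)
    have hD : HasDerivAt
        (fun x : ℝ =>
          Q2 q (x, b) * MF q (x, b)
            + 6 * (3 * Q2 q (x, b) * Q3 q (x, b) + Q1 q (x, b) * Q4 q (x, b)))
        ((Q3 q (a, b) * MF q (a, b) + Q2 q (a, b) * pdS (MF q) (a, b))
          + 6 * (((3 * Q3 q (a, b)) * Q3 q (a, b) + (3 * Q2 q (a, b)) * Q4 q (a, b))
            + (Q2 q (a, b) * Q4 q (a, b) + Q1 q (a, b) * Q5 q (a, b)))) a := by
      exact ((hasDerivAt_sliceS (smQ2 hq) a b).mul (hasDerivAt_sliceS (smMF hq) a b)).add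
        (((((hasDerivAt_sliceS (smQ2 hq) a b).const_mul 3).mul
            (hasDerivAt_sliceS (smQ3 hq) a b)).add
          ((hasDerivAt_sliceS (smQ1 hq) a b).mul
            (hasDerivAt_sliceS (smQ4 hq) a b))).const_mul 6)
    have h0 : HasDerivAt
        (fun x : ℝ =>
          Q2 q (x, b) * MF q (x, b)
            + 6 * (3 * Q2 q (x, b) * Q3 q (x, b) + Q1 q (x, b) * Q4 q (x, b)))
        0 a := by rw [hzero]; exact hasDerivAt_const a 0
    have hU := hD.unique h0
    linear_combination hU - Q2 q (a, b) * hMs (a, b)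
  have hR4 : ∀ u, Q4 q u * MF q u
      + 6 * (10 * Q3 q u * Q4 q u + 5 * Q2 q u * Q5 q u + Q1 q u * Q6 q u) = 0 := by
    rintro ⟨a, b⟩
    have hzero : (fun x : ℝ =>
        Q3 q (x, b) * MF q (x, b)
          + 6 * (3 * (Q3 q (x, b)) ^ 2 + 4 * Q2 q (x, b) * Q4 q (x, b)
              + Q1 q (x, b) * Q5 q (x, b)))
        = fun _ => (0 : ℝ) := by funext x; exact hR3 (x, b)
    have hD : HasDerivAt
        (fun x : ℝ =>
          Q3 q (x, b) * MF q (x, b)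
            + 6 * (3 * (Q3 q (x, b)) ^ 2 + 4 * Q2 q (x, b) * Q4 q (x, b)
                + Q1 q (x, b) * Q5 q (x, b)))
        ((Q4 q (a, b) * MF q (a, b) + Q3 q (a, b) * pdS (MF q) (a, b))
          + 6 * ((3 * (2 * Q3 q (a, b) ^ 1 * Q4 q (a, b))
              + ((4 * Q3 q (a, b)) * Q4 q (a, b) + (4 * Q2 q (a, b)) * Q5 q (a, b)))
            + (Q2 q (a, b) * Q5 q (a, b) + Q1 q (a, b) * Q6 q (a, b)))) a := by
      exact ((hasDerivAt_sliceS (smQ3 hq) a b).mul (hasDerivAt_sliceS (smMF hq) a b)).add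
        ((((((hasDerivAt_sliceS (smQ3 hq) a b).pow 2).const_mul 3).add
            (((hasDerivAt_sliceS (smQ2 hq) a b).const_mul 4).mul
              (hasDerivAt_sliceS (smQ4 hq) a b))).add
          ((hasDerivAt_sliceS (smQ1 hq) a b).mul
            (hasDerivAt_sliceS (smQ5 hq) a b))).const_mul 6)
    have h0 : HasDerivAt
        (fun x : ℝ =>
          Q3 q (x, b) * MF q (x, b)
            + 6 * (3 * (Q3 q (x, b)) ^ 2 + 4 * Q2 q (x, b) * Q4 q (x, b)
                + Q1 q (x, b) * Q5 q (x, b)))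
        0 a := by rw [hzero]; exact hasDerivAt_const a 0
    have hU := hD.unique h0
    linear_combination hU - Q3 q (a, b) * hMs (a, b)
  have hR5 : ∀ u, Q5 q u * MF q u
      + 6 * (10 * (Q4 q u) ^ 2 + 15 * Q3 q u * Q5 q u + 6 * Q2 q u * Q6 q u
          + Q1 q u * Q7 q u) = 0 := by
    rintro ⟨a, b⟩
    have hzero : (fun x : ℝ =>
        Q4 q (x, b) * MF q (x, b)
          + 6 * (10 * Q3 q (x, b) * Q4 q (x, b) + 5 * Q2 q (x, b) * Q5 q (x, b)
              + Q1 q (x, b) * Q6 q (x, b)))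
        = fun _ => (0 : ℝ) := by funext x; exact hR4 (x, b)
    have hD : HasDerivAt
        (fun x : ℝ =>
          Q4 q (x, b) * MF q (x, b)
            + 6 * (10 * Q3 q (x, b) * Q4 q (x, b) + 5 * Q2 q (x, b) * Q5 q (x, b)
                + Q1 q (x, b) * Q6 q (x, b)))
        ((Q5 q (a, b) * MF q (a, b) + Q4 q (a, b) * pdS (MF q) (a, b))
          + 6 * ((((10 * Q4 q (a, b)) * Q4 q (a, b) + (10 * Q3 q (a, b)) * Q5 q (a, b))
              + ((5 * Q3 q (a, b)) * Q5 q (a, b) + (5 * Q2 q (a, b)) * Q6 q (a, b)))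
            + (Q2 q (a, b) * Q6 q (a, b) + Q1 q (a, b) * Q7 q (a, b)))) a := by
      exact ((hasDerivAt_sliceS (smQ4 hq) a b).mul (hasDerivAt_sliceS (smMF hq) a b)).add
        ((((((hasDerivAt_sliceS (smQ3 hq) a b).const_mul 10).mul
              (hasDerivAt_sliceS (smQ4 hq) a b)).add
            (((hasDerivAt_sliceS (smQ2 hq) a b).const_mul 5).mul
              (hasDerivAt_sliceS (smQ5 hq) a b))).add
          ((hasDerivAt_sliceS (smQ1 hq) a b).mul
            (hasDerivAt_sliceS (smQ6 hq) a b))).const_mul 6)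
    have h0 : HasDerivAt
        (fun x : ℝ =>
          Q4 q (x, b) * MF q (x, b)
            + 6 * (10 * Q3 q (x, b) * Q4 q (x, b) + 5 * Q2 q (x, b) * Q5 q (x, b)
                + Q1 q (x, b) * Q6 q (x, b)))
        0 a := by rw [hzero]; exact hasDerivAt_const a 0
    have hU := hD.unique h0
    linear_combination hU - Q4 q (a, b) * hMs (a, b)
  -- t-derivatives of jets
  have hTQ2 : ∀ u, pdT (Q2 q) u = -(N2f q u) := by
    intro u
    have h1 : pdT (Q2 q) u = pdS (pdT (Q1 q)) u := by
      rw [show Q2 q = pdS (Q1 q) from rfl, pdS_pdT_comm (smQ1 hq) u]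
    rw [h1, pdS_congr (fun v => hE1 v) u, pdS_neg (smN1f hq) u, pdS_N1f hq u]
  have hTQ3 : ∀ u, pdT (Q3 q) u = -(N3f q u) := by
    intro u
    have h1 : pdT (Q3 q) u = pdS (pdT (Q2 q)) u := by
      rw [show Q3 q = pdS (Q2 q) from rfl, pdS_pdT_comm (smQ2 hq) u]
    rw [h1, pdS_congr (fun v => hTQ2 v) u, pdS_neg (smN2f hq) u, pdS_N2f hq u]
  have hMts : ∀ u, pdS (MT q) u = 0 := by
    intro u
    have h1 : pdS (MT q) u = pdT (pdS (MF q)) u := by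
      rw [show MT q = pdT (MF q) from rfl, pdS_pdT_comm (smMF hq) u]
    rw [h1, pdT_congr (fun v => hMs v) u, pdT_zero_fun]
  -- the T identity
  have hT : ∀ u, QT q u * MF q u + q u * MT q u
      - 6 * (N1f q u * Q2 q u + Q1 q u * N2f q u) = 0 := by
    rintro ⟨a, b⟩
    have hzero : (fun y : ℝ => q (a, y) * MF q (a, y) + 6 * (Q1 q (a, y) * Q2 q (a, y)))
        = fun _ => (0 : ℝ) := by funext y; exact hR0 (a, y)
    have hD : HasDerivAt
        (fun y : ℝ => q (a, y) * MF q (a, y) + 6 * (Q1 q (a, y) * Q2 q (a, y)))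
        ((QT q (a, b) * MF q (a, b) + q (a, b) * pdT (MF q) (a, b))
          + 6 * (pdT (Q1 q) (a, b) * Q2 q (a, b) + Q1 q (a, b) * pdT (Q2 q) (a, b))) b := by
      exact ((hasDerivAt_sliceT hq a b).mul (hasDerivAt_sliceT (smMF hq) a b)).add
        (((hasDerivAt_sliceT (smQ1 hq) a b).mul
          (hasDerivAt_sliceT (smQ2 hq) a b)).const_mul 6)
    have h0 : HasDerivAt
        (fun y : ℝ => q (a, y) * MF q (a, y) + 6 * (Q1 q (a, y) * Q2 q (a, y))) 0 b := by
      rw [hzero]; exact hasDerivAt_const b 0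
    have hU := hD.unique h0
    rw [hE1 (a, b), hTQ2 (a, b), show pdT (MF q) = MT q from rfl] at hU
    linear_combination hU
  -- pdS of the T identity
  have hTs : ∀ u, -(N1f q u) * MF q u + Q1 q u * MT q u
      - 6 * (N2f q u * Q2 q u + N1f q u * Q3 q u + Q2 q u * N2f q u + Q1 q u * N3f q u)
        = 0 := by
    rintro ⟨a, b⟩
    have hzero : (fun x : ℝ => QT q (x, b) * MF q (x, b) + q (x, b) * MT q (x, b)
        - 6 * (N1f q (x, b) * Q2 q (x, b) + Q1 q (x, b) * N2f q (x, b)))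
        = fun _ => (0 : ℝ) := by funext x; exact hT (x, b)
    have hD : HasDerivAt
        (fun x : ℝ => QT q (x, b) * MF q (x, b) + q (x, b) * MT q (x, b)
          - 6 * (N1f q (x, b) * Q2 q (x, b) + Q1 q (x, b) * N2f q (x, b)))
        (((pdS (QT q) (a, b) * MF q (a, b) + QT q (a, b) * pdS (MF q) (a, b))
            + (Q1 q (a, b) * MT q (a, b) + q (a, b) * pdS (MT q) (a, b)))
          - 6 * ((pdS (N1f q) (a, b) * Q2 q (a, b) + N1f q (a, b) * Q3 q (a, b))
            + (Q2 q (a, b) * N2f q (a, b) + Q1 q (a, b) * pdS (N2f q) (a, b)))) a := by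
      exact (((hasDerivAt_sliceS (smQT hq) a b).mul (hasDerivAt_sliceS (smMF hq) a b)).add
        ((hasDerivAt_sliceS hq a b).mul (hasDerivAt_sliceS (smMT hq) a b))).sub
        ((((hasDerivAt_sliceS (smN1f hq) a b).mul (hasDerivAt_sliceS (smQ2 hq) a b)).add
          ((hasDerivAt_sliceS (smQ1 hq) a b).mul
            (hasDerivAt_sliceS (smN2f hq) a b))).const_mul 6)
    have h0 : HasDerivAt
        (fun x : ℝ => QT q (x, b) * MF q (x, b) + q (x, b) * MT q (x, b)
          - 6 * (N1f q (x, b) * Q2 q (x, b) + Q1 q (x, b) * N2f q (x, b))) 0 a := by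
      rw [hzero]; exact hasDerivAt_const a 0
    have hU := hD.unique h0
    have hc : pdS (QT q) (a, b) = -(N1f q (a, b)) := by
      rw [show QT q = pdT q from rfl, pdS_pdT_comm hq (a, b),
        show pdS q = Q1 q from rfl, hE1 (a, b)]
    rw [hc, hMs (a, b), hMts (a, b), pdS_N1f hq (a, b), pdS_N2f hq (a, b)] at hU
    linear_combination hU
  -- pdS of the Ts identity
  have hTss : ∀ u, -(N2f q u * MF q u) + Q2 q u * MT q u
      - 6 * (3 * Q2 q u * N3f q u + 3 * Q3 q u * N2f q u + Q4 q u * N1f q u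
          + Q1 q u * N4f q u) = 0 := by
    rintro ⟨a, b⟩
    have hzero : (fun x : ℝ => -(N1f q (x, b)) * MF q (x, b) + Q1 q (x, b) * MT q (x, b)
        - 6 * (N2f q (x, b) * Q2 q (x, b) + N1f q (x, b) * Q3 q (x, b)
            + Q2 q (x, b) * N2f q (x, b) + Q1 q (x, b) * N3f q (x, b)))
        = fun _ => (0 : ℝ) := by funext x; exact hTs (x, b)
    have hD : HasDerivAt
        (fun x : ℝ => -(N1f q (x, b)) * MF q (x, b) + Q1 q (x, b) * MT q (x, b)
          - 6 * (N2f q (x, b) * Q2 q (x, b) + N1f q (x, b) * Q3 q (x, b)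
              + Q2 q (x, b) * N2f q (x, b) + Q1 q (x, b) * N3f q (x, b)))
        (((-pdS (N1f q) (a, b) * MF q (a, b) + -(N1f q (a, b)) * pdS (MF q) (a, b))
            + (Q2 q (a, b) * MT q (a, b) + Q1 q (a, b) * pdS (MT q) (a, b)))
          - 6 * ((((pdS (N2f q) (a, b) * Q2 q (a, b) + N2f q (a, b) * Q3 q (a, b))
              + (pdS (N1f q) (a, b) * Q3 q (a, b) + N1f q (a, b) * Q4 q (a, b)))
              + (Q3 q (a, b) * N2f q (a, b) + Q2 q (a, b) * pdS (N2f q) (a, b)))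
            + (Q2 q (a, b) * N3f q (a, b) + Q1 q (a, b) * pdS (N3f q) (a, b)))) a := by
      have hA := ((hasDerivAt_sliceS (smN1f hq) a b).neg).mul
        (hasDerivAt_sliceS (smMF hq) a b)
      have hB := (hasDerivAt_sliceS (smQ1 hq) a b).mul (hasDerivAt_sliceS (smMT hq) a b)
      have hC1 := (hasDerivAt_sliceS (smN2f hq) a b).mul (hasDerivAt_sliceS (smQ2 hq) a b)
      have hC2 := (hasDerivAt_sliceS (smN1f hq) a b).mul (hasDerivAt_sliceS (smQ3 hq) a b)
      have hC3 := (hasDerivAt_sliceS (smQ2 hq) a b).mul (hasDerivAt_sliceS (smN2f hq) a b)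
      have hC4 := (hasDerivAt_sliceS (smQ1 hq) a b).mul (hasDerivAt_sliceS (smN3f hq) a b)
      exact (hA.add hB).sub ((((hC1.add hC2).add hC3).add hC4).const_mul 6)
    have h0 : HasDerivAt
        (fun x : ℝ => -(N1f q (x, b)) * MF q (x, b) + Q1 q (x, b) * MT q (x, b)
          - 6 * (N2f q (x, b) * Q2 q (x, b) + N1f q (x, b) * Q3 q (x, b)
              + Q2 q (x, b) * N2f q (x, b) + Q1 q (x, b) * N3f q (x, b))) 0 a := by
      rw [hzero]; exact hasDerivAt_const a 0
    have hU := hD.unique h0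
    rw [hMs (a, b), hMts (a, b), pdS_N1f hq (a, b), pdS_N2f hq (a, b),
      pdS_N3f hq (a, b)] at hU
    linear_combination hU
  exact ⟨hMs, hR0, hR1, hR2, hR3, hR4, hR5, hT, hTss⟩

end Master

lemma Lalg (c q0 x y q3 q4 q5 q6 q7 qt mt N1 N2 N3 N4 : ℝ)
    (hN1 : N1 = 12 * q0 * x ^ 2 + 6 * q0 ^ 2 * y + q4)
    (hN2 : N2 = 12 * x ^ 3 + 36 * q0 * x * y + 6 * q0 ^ 2 * q3 + q5)
    (hN3 : N3 = 72 * x ^ 2 * y + 36 * q0 * y ^ 2 + 48 * q0 * x * q3 + 6 * q0 ^ 2 * q4 + q6)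
    (hN4 : N4 = 180 * x * y ^ 2 + 120 * x ^ 2 * q3 + 120 * q0 * y * q3 + 60 * q0 * x * q4
      + 6 * q0 ^ 2 * q5 + q7)
    (hMdef : c = qt + 6 * q0 ^ 2 * x + q3)
    (hR0 : q0 * c + 6 * (x * y) = 0)
    (hR1 : x * c + 6 * (y ^ 2 + x * q3) = 0)
    (hR2 : y * c + 6 * (3 * y * q3 + x * q4) = 0)
    (hR3 : q3 * c + 6 * (3 * q3 ^ 2 + 4 * y * q4 + x * q5) = 0)
    (hR5 : q5 * c + 6 * (10 * q4 ^ 2 + 15 * q3 * q5 + 6 * y * q6 + x * q7) = 0)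
    (hT : qt * c + q0 * mt - 6 * (N1 * y + x * N2) = 0)
    (hTss : -(N2 * c) + y * mt - 6 * (3 * y * N3 + 3 * q3 * N2 + q4 * N1 + x * N4) = 0)
    (hxy : x = 0 ∨ y = 0) : c = 0 := by
  by_contra hc
  by_cases hx : x = 0
  · subst hx
    have hy : y = 0 := by
      have h : y ^ 2 = 0 := by linear_combination hR1 / 6
      exact (pow_eq_zero_iff two_ne_zero).mp h
    subst hy
    have h0 : q0 = 0 := by
      have h : q0 * c = 0 := by linear_combination hR0
      rcases mul_eq_zero.mp h with h | h
      · exact h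
      · exact absurd h hc
    subst h0
    have hqt : qt = 0 := by
      have h : qt * c = 0 := by linear_combination hT
      rcases mul_eq_zero.mp h with h | h
      · exact h
      · exact absurd h hc
    have h3 : q3 = c := by
      rw [hqt] at hMdef; linarith
    rw [h3] at hR3
    have hcc : c ^ 2 = 0 := by linear_combination hR3 / 19
    exact hc ((pow_eq_zero_iff two_ne_zero).mp hcc)
  · have hy : y = 0 := hxy.resolve_left hx
    subst hy
    have h0 : q0 = 0 := by
      have h : q0 * c = 0 := by linear_combination hR0
      rcases mul_eq_zero.mp h with h | h
      · exact h
      · exact absurd h hc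
    subst h0
    have h3 : q3 = -c / 6 := by
      have h : x * (c + 6 * q3) = 0 := by linear_combination hR1
      rcases mul_eq_zero.mp h with h | h
      · exact absurd h hx
      · linarith
    subst h3
    have h4 : q4 = 0 := by
      have h : x * q4 = 0 := by linear_combination hR2 / 6
      rcases mul_eq_zero.mp h with h | h
      · exact absurd h hx
      · exact h
    subst h4
    have h5 : x * q5 = -c ^ 2 / 18 := by linear_combination hR3 / 6
    have h7 : 6 * (x * q7) = 14 * (c * q5) := by linear_combination hR5
    rw [hN1, hN2] at hT
    rw [hN1, hN2, hN3, hN4] at hTss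
    have hA : 72 * x ^ 4 = 3 / 2 * c ^ 2 := by
      linear_combination -hT - 6 * h5 - c * hMdef
    have hB : c * (144 * x ^ 3 - 12 * q5) = 0 := by
      linear_combination hTss + h7
    have hB2 : 144 * x ^ 3 - 12 * q5 = 0 := by
      rcases mul_eq_zero.mp hB with h | h
      · exact absurd h hc
      · exact h
    have hq5 : q5 = 12 * x ^ 3 := by linarith
    have hC : 72 * x ^ 4 = -(c ^ 2) / 3 := by
      linear_combination 6 * h5 - 6 * x * hq5
    have hcc : c ^ 2 = 0 := by linarith
    exact hc ((pow_eq_zero_iff two_ne_zero).mp hcc)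


lemma sign_const {f : ℝ → ℝ} (hf : Continuous f) (h0 : ∀ s, f s ≠ 0) :
    (∀ s, 0 < f s) ∨ (∀ s, f s < 0) := by
  rcases (h0 0).lt_or_gt with h | h
  · right; intro s
    by_contra hs
    push_neg at hs
    have h1 : 0 < f s := hs.lt_of_ne' (h0 s)
    obtain ⟨x, -, hx⟩ := intermediate_value_uIcc (a := 0) (b := s) hf.continuousOn
      (Set.mem_uIcc.mpr (Or.inl ⟨h.le, h1.le⟩))
    exact h0 x hx
  · left; intro s
    by_contra hs
    push_neg at hs
    have h1 : f s < 0 := hs.lt_of_ne (h0 s)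
    obtain ⟨x, -, hx⟩ := intermediate_value_uIcc (a := 0) (b := s) hf.continuousOn
      (Set.mem_uIcc.mpr (Or.inr ⟨h1.le, h.le⟩))
    exact h0 x hx

lemma hasDerivAt_cmul (m y : ℝ) : HasDerivAt (fun x : ℝ => m * x) m y := by
  simpa using (hasDerivAt_id y).const_mul m

lemma ge_linear {f f' : ℝ → ℝ} (hf : ∀ s, HasDerivAt f (f' s) s) {m : ℝ}
    (hm : ∀ s, m ≤ f' s) {s t : ℝ} (hst : s ≤ t) : f s + m * (t - s) ≤ f t := by
  have hmono : Monotone (fun y => f y - m * y) := by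
    apply monotone_of_deriv_nonneg
    · intro y
      exact ((hf y).sub (hasDerivAt_cmul m y)).differentiableAt
    · intro y
      rw [show deriv (fun y => f y - m * y) y = f' y - m from ((hf y).sub (hasDerivAt_cmul m y)).deriv]
      linarith [hm y]
  have h2 := hmono hst
  simp only at h2
  linarith

lemma le_linear {f f' : ℝ → ℝ} (hf : ∀ s, HasDerivAt f (f' s) s) {M : ℝ}
    (hM : ∀ s, f' s ≤ M) {s t : ℝ} (hst : s ≤ t) : f t ≤ f s + M * (t - s) := by
  have h := ge_linear (f := fun y => -f y) (f' := fun y => -f' y)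
    (fun y => (hf y).neg) (m := -M) (fun y => neg_le_neg (hM y)) hst
  linarith

lemma tangent_concave {w w1 w2 : ℝ → ℝ} (hw : ∀ s, HasDerivAt w (w1 s) s)
    (hw1 : ∀ s, HasDerivAt w1 (w2 s) s) (hcc : ∀ s, w2 s ≤ 0) (s : ℝ) :
    w s ≤ w 0 + w1 0 * s := by
  have hanti : Antitone w1 :=
    antitone_of_deriv_nonpos (fun y => (hw1 y).differentiableAt)
      (fun y => by rw [(hw1 y).deriv]; exact hcc y)
  have hφd : ∀ y : ℝ, HasDerivAt (fun z => w 0 + w1 0 * z - w z) (w1 0 - w1 y) y := by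
    intro y
    exact ((hasDerivAt_const y (w 0)).add (hasDerivAt_cmul (w1 0) y)).sub (hw y) |>.congr_deriv
      (by ring)
  have hφc : Continuous (fun z => w 0 + w1 0 * z - w z) :=
    continuous_iff_continuousAt.mpr fun y => (hφd y).continuousAt
  rcases le_total 0 s with h0s | hs0
  · have hmono : MonotoneOn (fun z => w 0 + w1 0 * z - w z) (Set.Ici 0) := by
      apply monotoneOn_of_deriv_nonneg (convex_Ici 0) hφc.continuousOn
      · intro y _
        exact (hφd y).differentiableAt.differentiableWithinAt
      · intro y hy
        rw [interior_Ici] at hy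
        rw [(hφd y).deriv]
        have := hanti (le_of_lt hy)
        linarith
    have := hmono (Set.self_mem_Ici) (Set.mem_Ici.mpr h0s) h0s
    simp only at this
    linarith
  · have hanti2 : AntitoneOn (fun z => w 0 + w1 0 * z - w z) (Set.Iic 0) := by
      apply antitoneOn_of_deriv_nonpos (convex_Iic 0) hφc.continuousOn
      · intro y _
        exact (hφd y).differentiableAt.differentiableWithinAt
      · intro y hy
        rw [interior_Iic] at hy
        rw [(hφd y).deriv]
        have := hanti (le_of_lt hy)
        linarith
    have := hanti2 (Set.mem_Iic.mpr hs0) (Set.self_mem_Iic) hs0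
    simp only at this
    linarith

/-- The core analytic lemma: no global structure can support `c ≠ 0`. -/
lemma core (c : ℝ) (hc : c ≠ 0) (g h k : ℝ → ℝ)
    (hg : ∀ s, HasDerivAt g (h s) s) (hh : ∀ s, HasDerivAt h (k s) s)
    (hgne : ∀ s, g s ≠ 0) (hhne : ∀ s, h s ≠ 0)
    (hR1 : ∀ s, c * g s + 6 * ((h s) ^ 2 + g s * k s) = 0) : False := by
  have hgc : Continuous g := continuous_iff_continuousAt.mpr fun s => (hg s).continuousAt
  have hhc : Continuous h := continuous_iff_continuousAt.mpr fun s => (hh s).continuousAt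
  have hw : ∀ s, HasDerivAt (fun y => (g y) ^ 2) (2 * g s * h s) s := by
    intro s
    exact ((hg s).pow 2).congr_deriv (by ring)
  have hw1 : ∀ s, HasDerivAt (fun y => 2 * g y * h y) (-(c / 3) * g s) s := by
    intro s
    have hD := ((hg s).const_mul 2).mul (hh s)
    exact hD.congr_deriv (by linear_combination (1 / 3 : ℝ) * hR1 s)
  have hw1ne : ∀ s, 2 * g s * h s ≠ 0 := fun s =>
    mul_ne_zero (mul_ne_zero two_ne_zero (hgne s)) (hhne s)
  have hw1c : Continuous fun s => 2 * g s * h s := by continuity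
  rcases sign_const (continuous_const.mul hgc) (fun s => mul_ne_zero hc (hgne s)) with hP | hN
  · -- c * g > 0 everywhere : w = g² is concave, tangent line kills positivity
    have htan := tangent_concave hw hw1 (fun s => by nlinarith [show 0 < c * g s from hP s])
    obtain ⟨L, hLne, hL⟩ : ∃ L : ℝ, L ≠ 0 ∧ L = 2 * g 0 * h 0 := ⟨_, hw1ne 0, rfl⟩
    obtain ⟨s0, hs0⟩ : ∃ s0 : ℝ, (g 0) ^ 2 + L * s0 = -1 := by
      refine ⟨(-1 - (g 0) ^ 2) / L, ?_⟩
      field_simp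
      ring
    have h1 := htan s0
    rw [← hL] at h1
    nlinarith [sq_nonneg (g s0)]
  · -- c * g < 0 everywhere : w = g² is convex
    have hCd : ∀ s, HasDerivAt (fun y => 4 * (g y) ^ 2 * (h y) ^ 2 + 4 * c / 9 * (g y) ^ 3)
        0 s := by
      intro s
      have hD := ((((hg s).pow 2).const_mul 4).mul ((hh s).pow 2)).add
        (((hg s).pow 3).const_mul (4 * c / 9))
      exact hD.congr_deriv (by simp only [Pi.pow_apply]; linear_combination (4 / 3 : ℝ) * g s * h s * hR1 s)
    obtain ⟨C0, hCconst⟩ : ∃ C0 : ℝ,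
        ∀ s, 4 * (g s) ^ 2 * (h s) ^ 2 + 4 * c / 9 * (g s) ^ 3 = C0 := by
      refine ⟨4 * (g 0) ^ 2 * (h 0) ^ 2 + 4 * c / 9 * (g 0) ^ 3, fun s => ?_⟩
      exact is_const_of_deriv_eq_zero (fun y => (hCd y).differentiableAt)
        (fun y => (hCd y).deriv) s 0
    rcases lt_trichotomy C0 0 with hC0 | hC0 | hC0
    · -- C0 < 0 : uniform positive lower bound on w'' forces w' to change sign
      obtain ⟨m, hmpos, hmcube⟩ : ∃ m : ℝ, 0 < m ∧ m ^ 3 = c ^ 2 * (-(9 / 4) * C0) / 27 := by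
        have h1 : (0:ℝ) < c ^ 2 := by positivity
        have h2 : (0:ℝ) < -C0 := neg_pos.mpr hC0
        have h3 : (0:ℝ) < c ^ 2 * (-(9 / 4) * C0) / 27 := by nlinarith [mul_pos h1 h2]
        refine ⟨(c ^ 2 * (-(9 / 4) * C0) / 27) ^ ((1 : ℝ) / 3),
          Real.rpow_pos_of_pos h3 _, ?_⟩
        rw [← Real.rpow_natCast ((c ^ 2 * (-(9 / 4) * C0) / 27) ^ ((1 : ℝ) / 3)) 3,
          ← Real.rpow_mul h3.le]
        norm_num
      have hlb : ∀ s, m ≤ -(c / 3) * g s := by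
        intro s
        have hpos : 0 < -(c / 3) * g s := by nlinarith [show c * g s < 0 from hN s]
        by_contra hlt
        push_neg at hlt
        have hcube : (-(c / 3) * g s) ^ 3 < m ^ 3 := by
          apply pow_lt_pow_left₀ hlt hpos.le
          norm_num
        rw [hmcube] at hcube
        have hCs := hCconst s
        have hge : -(9 / 4) * C0 ≤ (-c * g s) * (g s) ^ 2 := by
          nlinarith [hCs, sq_nonneg (g s * h s)]
        nlinarith [hcube, hge, sq_nonneg c]
      rcases sign_const hw1c hw1ne with hp | hn
      · obtain ⟨s1, hs1le, hms1⟩ : ∃ s1 : ℝ, s1 ≤ 0 ∧ m * s1 = -1 - 2 * g 0 * h 0 := by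
          refine ⟨(-1 - 2 * g 0 * h 0) / m, ?_, ?_⟩
          · apply div_nonpos_of_nonpos_of_nonneg _ hmpos.le
            nlinarith [hp 0]
          · field_simp
        have h1 := ge_linear hw1 hlb hs1le
        nlinarith [hp s1]
      · obtain ⟨s2, hs2ge, hms2⟩ : ∃ s2 : ℝ, 0 ≤ s2 ∧ m * s2 = 1 - 2 * g 0 * h 0 := by
          refine ⟨(1 - 2 * g 0 * h 0) / m, ?_, ?_⟩
          · apply div_nonneg _ hmpos.le
            nlinarith [hn 0]
          · field_simp
        have h1 := ge_linear hw1 hlb hs2ge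
        nlinarith [hn s2]
    · -- C0 = 0 : h is affine with nonzero slope, contradiction
      have hid : ∀ s, (h s) ^ 2 = -(c / 9) * g s := by
        intro s
        have hCs := hCconst s
        rw [hC0] at hCs
        have hfac : (g s) ^ 2 * ((h s) ^ 2 + c / 9 * g s) = 0 := by
          linear_combination hCs / 4
        rcases mul_eq_zero.mp hfac with h1 | h1
        · exact absurd ((pow_eq_zero_iff two_ne_zero).mp h1) (hgne s)
        · linarith
      have hk : ∀ s, k s = -c / 18 := by
        intro s
        have d1 : HasDerivAt (fun y => (h y) ^ 2) (2 * h s * k s) s :=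
          ((hh s).pow 2).congr_deriv (by ring)
        have d2 : HasDerivAt (fun y => -(c / 9) * g y) (-(c / 9) * h s) s :=
          (hg s).const_mul _
        have e : (fun y => (h y) ^ 2) = fun y => -(c / 9) * g y := funext hid
        rw [e] at d1
        have hEq := d1.unique d2
        have hfac : h s * (2 * k s + c / 9) = 0 := by linear_combination hEq
        rcases mul_eq_zero.mp hfac with h1 | h1
        · exact absurd h1 (hhne s)
        · linarith
      have hφ : ∀ s, HasDerivAt (fun y => h y + c / 18 * y) 0 s := by
        intro s
        have hD := (hh s).add (hasDerivAt_cmul (c / 18) s)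
        exact hD.congr_deriv (by rw [hk s]; ring)
      have hconst := is_const_of_deriv_eq_zero (fun y => (hφ y).differentiableAt)
        (fun y => (hφ y).deriv)
      obtain ⟨sstar, hcs⟩ : ∃ sstar : ℝ, c / 18 * sstar = h 0 := by
        refine ⟨18 * h 0 / c, ?_⟩
        field_simp
      have h1 := hconst sstar 0
      have hzero : h sstar = 0 := by linarith
      exact hhne sstar hzero
    · -- C0 > 0 : |w'| ≥ √C0 everywhere, linear escape of w = g² below 0
      have hge : ∀ s, C0 ≤ (2 * g s * h s) ^ 2 := by
        intro s
        have hCs := hCconst s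
        nlinarith [hCs, mul_nonneg (neg_nonneg.mpr (show c * g s < 0 from hN s).le) (sq_nonneg (g s))]
      obtain ⟨r, hrpos, hrsq⟩ : ∃ r : ℝ, 0 < r ∧ r ^ 2 = C0 :=
        ⟨Real.sqrt C0, Real.sqrt_pos.mpr hC0, Real.sq_sqrt hC0.le⟩
      rcases sign_const hw1c hw1ne with hp | hn
      · have hblo : ∀ s, r ≤ 2 * g s * h s := by
          intro s
          nlinarith [hge s, hp s, hrpos]
        obtain ⟨s3, hs3le, hrs3⟩ : ∃ s3 : ℝ, s3 ≤ 0 ∧ r * s3 = -1 - (g 0) ^ 2 := by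
          refine ⟨(-1 - (g 0) ^ 2) / r, ?_, ?_⟩
          · apply div_nonpos_of_nonpos_of_nonneg _ hrpos.le
            nlinarith [sq_nonneg (g 0)]
          · field_simp
        have h1 := ge_linear hw hblo hs3le
        nlinarith [sq_nonneg (g s3)]
      · have hbhi : ∀ s, 2 * g s * h s ≤ -r := by
          intro s
          nlinarith [hge s, hn s, hrpos]
        obtain ⟨s4, hs4ge, hrs4⟩ : ∃ s4 : ℝ, 0 ≤ s4 ∧ r * s4 = (g 0) ^ 2 + 1 := by
          refine ⟨((g 0) ^ 2 + 1) / r, ?_, ?_⟩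
          · apply div_nonneg _ hrpos.le
            nlinarith [sq_nonneg (g 0)]
          · field_simp
        have h1 := le_linear hw hbhi hs4ge
        nlinarith [sq_nonneg (g s4)]


end Miura

open Miura in
/-- **Miura map for the MKdV equation (Proposition 2-2).**
If `q` is smooth and both `p₊ = q² + ∂ₛ q` and `p₋ = q² − ∂ₛ q` satisfy the KdV
equation `∂ₜ p + 6 p ∂ₛ p + ∂ₛ³ p = 0` on all of `ℝ²`, then `q` satisfies the
modified KdV equation `∂ₜ q + 6 q² ∂ₛ q + ∂ₛ³ q = 0` on all of `ℝ²`. -/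
theorem miura_map_mkdv (q : ℝ × ℝ → ℝ) (hq : ContDiff ℝ (⊤ : ℕ∞) q)
    (pPlus pMinus : ℝ × ℝ → ℝ)
    (hpPlus : pPlus = fun u => (q u) ^ 2 + pdS q u)
    (hpMinus : pMinus = fun u => (q u) ^ 2 - pdS q u)
    (hKdVPlus : ∀ u : ℝ × ℝ,
      pdT pPlus u + 6 * pPlus u * pdS pPlus u + pdS (pdS (pdS pPlus)) u = 0)
    (hKdVMinus : ∀ u : ℝ × ℝ,
      pdT pMinus u + 6 * pMinus u * pdS pMinus u + pdS (pdS (pdS pMinus)) u = 0) :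
    ∀ u : ℝ × ℝ,
      pdT q u + 6 * (q u) ^ 2 * pdS q u + pdS (pdS (pdS q)) u = 0 := by
  intro u0
  obtain ⟨hMs, hR0, hR1, hR2, hR3, hR4, hR5, hT, hTss⟩ :=
    master hq pPlus pMinus hpPlus hpMinus hKdVPlus hKdVMinus
  show MF q u0 = 0
  by_contra hc
  have hMline : ∀ s, MF q (s, u0.2) = MF q u0 := by
    intro s
    have hconst := is_const_of_deriv_eq_zero
      (f := fun x => MF q (x, u0.2))
      (fun x => (hasDerivAt_sliceS (smMF hq) x u0.2).differentiableAt)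
      (fun x => by
        rw [(hasDerivAt_sliceS (smMF hq) x u0.2).deriv]
        exact hMs (x, u0.2))
    exact hconst s u0.1
  have hL : ∀ s : ℝ, (Q1 q (s, u0.2) = 0 ∨ Q2 q (s, u0.2) = 0) → False := by
    intro s hxy
    apply hc
    rw [← hMline s]
    exact Lalg (MF q (s, u0.2)) (q (s, u0.2)) (Q1 q (s, u0.2)) (Q2 q (s, u0.2))
      (Q3 q (s, u0.2)) (Q4 q (s, u0.2)) (Q5 q (s, u0.2)) (Q6 q (s, u0.2)) (Q7 q (s, u0.2))
      (QT q (s, u0.2)) (MT q (s, u0.2)) (N1f q (s, u0.2)) (N2f q (s, u0.2))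
      (N3f q (s, u0.2)) (N4f q (s, u0.2)) rfl rfl rfl rfl rfl
      (hR0 (s, u0.2)) (hR1 (s, u0.2)) (hR2 (s, u0.2)) (hR3 (s, u0.2)) (hR5 (s, u0.2))
      (hT (s, u0.2)) (hTss (s, u0.2)) hxy
  have hxne : ∀ s, Q1 q (s, u0.2) ≠ 0 := fun s hx => hL s (Or.inl hx)
  have hyne : ∀ s, Q2 q (s, u0.2) ≠ 0 := fun s hy => hL s (Or.inr hy)
  exact core (MF q u0) hc (fun s => Q1 q (s, u0.2)) (fun s => Q2 q (s, u0.2))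
    (fun s => Q3 q (s, u0.2))
    (fun s => hasDerivAt_sliceS (smQ1 hq) s u0.2)
    (fun s => hasDerivAt_sliceS (smQ2 hq) s u0.2)
    hxne hyne
    (fun s => by
      have h := hR1 (s, u0.2)
      rw [hMline s] at h
      linear_combination h)
end
end

section
/- Complex static Miura map: Let U ⊆ ℂ be a connected open set, q : U → ℂ holomorphic, and C ∈ ℂ a constant. Define p₊ := q² + i q′ and p₋ := q² − i q′, where ′ denotes d/du and i = √−1. If both p₊ and p₋ satisfy C p′ + 6 p p′ + p′′′ = 0 on U, then q satisfies the static MKdV equation C q′ + 6 q² q′ + q′′′ = 0 on U. -/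
open Complex

noncomputable section

private lemma iter3_eq (f : ℂ → ℂ) : iteratedDeriv 3 f = deriv (deriv (deriv f)) := by
  rw [show (3:ℕ) = 2 + 1 from rfl, iteratedDeriv_succ,
    show (2:ℕ) = 1 + 1 from rfl, iteratedDeriv_succ, iteratedDeriv_one]

/-- **Complex static Miura map.**
Let `U ⊆ ℂ` be a connected open set, `q` holomorphic on `U`, and `C ∈ ℂ`.
If both `p₊ = q² + i q′` and `p₋ = q² − i q′` satisfy the static KdV-type
equation `C p′ + 6 p p′ + p′′′ = 0` on `U`, then `q` satisfies the static MKdV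
equation `C q′ + 6 q² q′ + q′′′ = 0` on `U`. -/
theorem static_miura_map (U : Set ℂ) (hUopen : IsOpen U) (hUconn : IsConnected U)
    (q : ℂ → ℂ) (hq : DifferentiableOn ℂ q U) (C : ℂ)
    (pPlus pMinus : ℂ → ℂ)
    (hpPlus : ∀ u ∈ U, pPlus u = (q u) ^ 2 + Complex.I * deriv q u)
    (hpMinus : ∀ u ∈ U, pMinus u = (q u) ^ 2 - Complex.I * deriv q u)
    (hKdVPlus : ∀ u ∈ U,
      C * deriv pPlus u + 6 * pPlus u * deriv pPlus u + iteratedDeriv 3 pPlus u = 0)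
    (hKdVMinus : ∀ u ∈ U,
      C * deriv pMinus u + 6 * pMinus u * deriv pMinus u + iteratedDeriv 3 pMinus u = 0) :
    ∀ u ∈ U,
      C * deriv q u + 6 * (q u) ^ 2 * deriv q u + iteratedDeriv 3 q u = 0 := by
  have hqa : AnalyticOnNhd ℂ q U := hq.analyticOnNhd hUopen
  set q1 := deriv q with hq1
  set q2 := deriv q1 with hq2
  set q3 := deriv q2 with hq3
  set q4 := deriv q3 with hq4
  have h1a : AnalyticOnNhd ℂ q1 U := hqa.deriv
  have h2a : AnalyticOnNhd ℂ q2 U := h1a.deriv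
  have h3a : AnalyticOnNhd ℂ q3 U := h2a.deriv
  -- HasDerivAt facts
  have hd0 : ∀ u ∈ U, HasDerivAt q (q1 u) u := fun u hu =>
    (hqa u hu).differentiableAt.hasDerivAt
  have hd1 : ∀ u ∈ U, HasDerivAt q1 (q2 u) u := fun u hu =>
    (h1a u hu).differentiableAt.hasDerivAt
  have hd2 : ∀ u ∈ U, HasDerivAt q2 (q3 u) u := fun u hu =>
    (h2a u hu).differentiableAt.hasDerivAt
  have hd3 : ∀ u ∈ U, HasDerivAt q3 (q4 u) u := fun u hu =>
    (h3a u hu).differentiableAt.hasDerivAt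
  -- generic computation of the three derivatives of q^2 + c * q1 on U
  have key : ∀ (c : ℂ) (p : ℂ → ℂ), (∀ u ∈ U, p u = (q u) ^ 2 + c * q1 u) →
      (∀ u ∈ U, deriv p u = 2 * q u * q1 u + c * q2 u) ∧
      (∀ u ∈ U, iteratedDeriv 3 p u
        = 6 * q1 u * q2 u + 2 * q u * q3 u + c * q4 u) := by
    intro c p hp
    have hde : ∀ u ∈ U, deriv p u = 2 * q u * q1 u + c * q2 u := by
      intro u hu
      have he : p =ᶠ[nhds u] fun x => (q x) ^ 2 + c * q1 x :=
        Filter.eventually_of_mem (hUopen.mem_nhds hu) hp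
      have hder : HasDerivAt (fun x => (q x) ^ 2 + c * q1 x)
          (2 * q u * q1 u + c * q2 u) u := by
        have h1 : HasDerivAt (fun x => (q x) ^ 2) (2 * q u * q1 u) u := by
          have := ((hd0 u hu).mul (hd0 u hu))
          have h2 : HasDerivAt (fun x => q x * q x) (q1 u * q u + q u * q1 u) u := this
          have : (fun x => (q x) ^ 2) = fun x => q x * q x := by ext x; ring
          rw [this]
          convert h2 using 1; ring
        exact h1.add ((hd1 u hu).const_mul c)
      rw [he.deriv_eq]
      exact hder.deriv
    refine ⟨hde, ?_⟩
    have hde2 : ∀ u ∈ U, deriv (deriv p) u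
        = 2 * q1 u * q1 u + 2 * q u * q2 u + c * q3 u := by
      intro u hu
      have he : deriv p =ᶠ[nhds u] fun x => 2 * q x * q1 x + c * q2 x :=
        Filter.eventually_of_mem (hUopen.mem_nhds hu) hde
      have hder : HasDerivAt (fun x => 2 * q x * q1 x + c * q2 x)
          (2 * q1 u * q1 u + 2 * q u * q2 u + c * q3 u) u := by
        have h1 : HasDerivAt (fun x => 2 * q x * q1 x)
            ((2 * q1 u) * q1 u + (2 * q u) * q2 u) u :=
          (((hd0 u hu).const_mul (2:ℂ)).mul (hd1 u hu))
        exact (h1.add ((hd2 u hu).const_mul c))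
      rw [he.deriv_eq]
      exact hder.deriv
    intro u hu
    rw [iter3_eq]
    have he : deriv (deriv p) =ᶠ[nhds u]
        fun x => 2 * q1 x * q1 x + 2 * q x * q2 x + c * q3 x :=
      Filter.eventually_of_mem (hUopen.mem_nhds hu) hde2
    have hder : HasDerivAt (fun x => 2 * q1 x * q1 x + 2 * q x * q2 x + c * q3 x)
        (6 * q1 u * q2 u + 2 * q u * q3 u + c * q4 u) u := by
      have h1 : HasDerivAt (fun x => 2 * q1 x * q1 x)
          ((2 * q2 u) * q1 u + (2 * q1 u) * q2 u) u :=
        (((hd1 u hu).const_mul (2:ℂ)).mul (hd1 u hu))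
      have h2 : HasDerivAt (fun x => 2 * q x * q2 x)
          ((2 * q1 u) * q2 u + (2 * q u) * q3 u) u :=
        (((hd0 u hu).const_mul (2:ℂ)).mul (hd2 u hu))
      have h3 : HasDerivAt (fun x => 2 * q1 x * q1 x + 2 * q x * q2 x + c * q3 x)
          (((2 * q2 u) * q1 u + (2 * q1 u) * q2 u)
            + ((2 * q1 u) * q2 u + (2 * q u) * q3 u) + c * q4 u) u :=
        ((h1.add h2).add ((hd3 u hu).const_mul c))
      convert h3 using 1; ring
    rw [he.deriv_eq]
    exact hder.deriv
  obtain ⟨hP1, hP3⟩ := key Complex.I pPlus hpPlus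
  obtain ⟨hM1, hM3⟩ := key (-Complex.I) pMinus (by
    intro u hu; rw [hpMinus u hu]; ring)
  -- the sum of the two KdV equations gives q * F = 0 on U
  set F : ℂ → ℂ := fun x => C * q1 x + 6 * (q x) ^ 2 * q1 x + q3 x with hF
  have hqF : ∀ u ∈ U, q u * F u = 0 := by
    intro u hu
    have hP := hKdVPlus u hu
    have hM := hKdVMinus u hu
    rw [hP1 u hu, hP3 u hu, hpPlus u hu] at hP
    rw [hM1 u hu, hM3 u hu, hpMinus u hu] at hM
    have hI : (Complex.I : ℂ) ^ 2 = -1 := Complex.I_sq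
    simp only [hF]
    linear_combination hP / 4 + hM / 4 - 3 * q1 u * q2 u * hI
  -- F is analytic on U
  have hFa : AnalyticOnNhd ℂ F U := by
    apply AnalyticOnNhd.add
    apply AnalyticOnNhd.add
    · exact (analyticOnNhd_const).mul h1a
    · exact ((analyticOnNhd_const).mul (hqa.pow 2)).mul h1a
    · exact h3a
  -- conclude F = 0 on U
  have hFzero : ∀ u ∈ U, F u = 0 := by
    rcases hqa.eqOn_zero_or_eventually_ne_zero_of_preconnected hUconn.isPreconnected with
      hz | hnz
    · -- q ≡ 0 on U, hence all its derivatives vanish on U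
      have hq0 : ∀ u ∈ U, q =ᶠ[nhds u] (fun _ => 0) := fun u hu =>
        Filter.eventually_of_mem (hUopen.mem_nhds hu) (fun x hx => hz hx)
      have hq1z : ∀ u ∈ U, q1 u = 0 := by
        intro u hu
        rw [hq1, (hq0 u hu).deriv_eq, deriv_const]
      have hq2z : ∀ u ∈ U, q2 u = 0 := by
        intro u hu
        have : q1 =ᶠ[nhds u] (fun _ => 0) :=
          Filter.eventually_of_mem (hUopen.mem_nhds hu) (fun x hx => hq1z x hx)
        rw [hq2, this.deriv_eq, deriv_const]
      have hq3z : ∀ u ∈ U, q3 u = 0 := by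
        intro u hu
        have : q2 =ᶠ[nhds u] (fun _ => 0) :=
          Filter.eventually_of_mem (hUopen.mem_nhds hu) (fun x hx => hq2z x hx)
        rw [hq3, this.deriv_eq, deriv_const]
      intro u hu
      simp [hF, hq1z u hu, hq3z u hu]
    · -- q ≠ 0 codiscretely within U: F vanishes frequently near any point of U
      obtain ⟨u₀, hu₀⟩ := hUconn.nonempty
      have hmem := (mem_codiscreteWithin.mp hnz) u₀ hu₀
      rw [Filter.disjoint_principal_right] at hmem
      have hUev : ∀ᶠ x in nhdsWithin u₀ {u₀}ᶜ, x ∈ U :=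
        eventually_nhdsWithin_of_eventually_nhds
          (Filter.eventually_of_mem (hUopen.mem_nhds hu₀) (fun x hx => hx))
      have hfreq : ∃ᶠ x in nhdsWithin u₀ {u₀}ᶜ, F x = 0 := by
        apply Filter.Eventually.frequently
        filter_upwards [hmem, hUev] with x hx hxU
        have hqx : q x ≠ 0 := by
          simp only [Set.mem_compl_iff, Set.mem_diff] at hx
          by_contra hq0
          exact hx ⟨hxU, by simpa using hq0⟩
        have := hqF x hxU
        exact (mul_eq_zero.mp this).resolve_left hqx
      have := hFa.eqOn_zero_of_preconnected_of_frequently_eq_zero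
        hUconn.isPreconnected hu₀ hfreq
      intro u hu
      exact this hu
  intro u hu
  have h3q : iteratedDeriv 3 q u = q3 u := by
    rw [iter3_eq]
  have := hFzero u hu
  simp only [hF] at this
  rw [h3q]
  exact this
end
end

section
/- KdV equation from Baker's relation (H-1) (equation (4-30) in the proof of Lemma 4-8): Let U ⊆ ℂ² be open, σ : U → ℂ holomorphic and nowhere vanishing, and define ℘_{jk} := −∂_j ∂_k log σ for j,k ∈ {1,2}, where ∂_j = ∂/∂u_j. Let λ₃, λ₄ ∈ ℂ be constants and suppose Baker's relation (H-1) holds on U: ∂₂² ℘₂₂ − 6 ℘₂₂² = 2λ₃ + 4λ₄ ℘₂₂ + 4 ℘₂₁ (the case λ₅ = 1). Set a₂ := −λ₄/3. Then q := −2℘₂₂ − λ₄ − a₂ satisfies the KdV-type equation −4 ∂₁ q + 6 q ∂₂ q + ∂₂³ q = 0 on U. -/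
/-!
Write `P = ℘₂₂` and `R = ℘₂₁`. Differentiating (H-1) in `u₂` gives
`∂₂³P = 12 P ∂₂P + 4λ₄ ∂₂P + 4 ∂₂R`, and `∂₂R = ∂₁P` because both are `−∂₁∂₂² log σ`
(symmetry of second derivatives of the holomorphic function `∂₂ log σ = ∂₂σ/σ`).
Substituting `q = −2P − 2λ₄/3` makes the KdV expression vanish identically.
-/

open Complex

noncomputable section

/-- Partial derivative in the first complex variable `u₁`. -/
def pd1 (f : ℂ × ℂ → ℂ) (u : ℂ × ℂ) : ℂ := deriv (fun z => f (z, u.2)) u.1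

/-- Partial derivative in the second complex variable `u₂`. -/
def pd2 (f : ℂ × ℂ → ℂ) (u : ℂ × ℂ) : ℂ := deriv (fun z => f (u.1, z)) u.2

/-- Baker's `℘₂₂ = −∂₂ ∂₂ log σ = −∂₂(∂₂σ/σ)`. -/
def bakerP22 (σ : ℂ × ℂ → ℂ) : ℂ × ℂ → ℂ :=
  fun u => -(pd2 (fun v => pd2 σ v / σ v) u)

/-- Baker's `℘₂₁ = −∂₂ ∂₁ log σ = −∂₂(∂₁σ/σ)`. -/
def bakerP21 (σ : ℂ × ℂ → ℂ) : ℂ × ℂ → ℂ :=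
  fun u => -(pd2 (fun v => pd1 σ v / σ v) u)

open Filter Topology

variable {f g : ℂ × ℂ → ℂ} {u : ℂ × ℂ}

lemma hasDerivAt_pd1 (hf : DifferentiableAt ℂ f u) :
    HasDerivAt (fun z => f (z, u.2)) (fderiv ℂ f u (1, 0)) u.1 :=
  hf.hasFDerivAt.comp_hasDerivAt u.1 ((hasDerivAt_id u.1).prodMk (hasDerivAt_const u.1 u.2))

lemma hasDerivAt_pd2 (hf : DifferentiableAt ℂ f u) :
    HasDerivAt (fun z => f (u.1, z)) (fderiv ℂ f u (0, 1)) u.2 :=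
  hf.hasFDerivAt.comp_hasDerivAt u.2 ((hasDerivAt_const u.2 u.1).prodMk (hasDerivAt_id u.2))

lemma pd1_eq_fderiv (hf : DifferentiableAt ℂ f u) : pd1 f u = fderiv ℂ f u (1, 0) :=
  (hasDerivAt_pd1 hf).deriv

lemma pd2_eq_fderiv (hf : DifferentiableAt ℂ f u) : pd2 f u = fderiv ℂ f u (0, 1) :=
  (hasDerivAt_pd2 hf).deriv

lemma pd1_congr (h : f =ᶠ[𝓝 u] g) : pd1 f u = pd1 g u :=
  (h.comp_tendsto (Continuous.tendsto (by fun_prop) u.1)).deriv_eq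

lemma pd2_congr (h : f =ᶠ[𝓝 u] g) : pd2 f u = pd2 g u :=
  (h.comp_tendsto (Continuous.tendsto (by fun_prop) u.2)).deriv_eq

lemma pd1_neg (f : ℂ × ℂ → ℂ) : pd1 (fun v => -f v) = fun v => -pd1 f v :=
  funext fun _ => deriv.neg

lemma pd2_neg (f : ℂ × ℂ → ℂ) : pd2 (fun v => -f v) = fun v => -pd2 f v :=
  funext fun _ => deriv.neg

lemma pd1_const_mul (c : ℂ) (f : ℂ × ℂ → ℂ) : pd1 (fun v => c * f v) = fun v => c * pd1 f v :=
  funext fun _ => deriv_const_mul_field c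

lemma pd2_const_mul (c : ℂ) (f : ℂ × ℂ → ℂ) : pd2 (fun v => c * f v) = fun v => c * pd2 f v :=
  funext fun _ => deriv_const_mul_field c

lemma pd1_sub_const (f : ℂ × ℂ → ℂ) (c : ℂ) : pd1 (fun v => f v - c) = pd1 f :=
  funext fun _ => deriv_sub_const c

lemma pd2_sub_const (f : ℂ × ℂ → ℂ) (c : ℂ) : pd2 (fun v => f v - c) = pd2 f :=
  funext fun _ => deriv_sub_const c

lemma pd1_div (hf : DifferentiableAt ℂ f u) (hg : DifferentiableAt ℂ g u) (hg₀ : g u ≠ 0) :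
    pd1 (fun v => f v / g v) u = (pd1 f u * g u - f u * pd1 g u) / g u ^ 2 := by
  rw [pd1_eq_fderiv hf, pd1_eq_fderiv hg]
  exact ((hasDerivAt_pd1 hf).div (hasDerivAt_pd1 hg) hg₀).deriv

lemma pd2_div (hf : DifferentiableAt ℂ f u) (hg : DifferentiableAt ℂ g u) (hg₀ : g u ≠ 0) :
    pd2 (fun v => f v / g v) u = (pd2 f u * g u - f u * pd2 g u) / g u ^ 2 := by
  rw [pd2_eq_fderiv hf, pd2_eq_fderiv hg]
  exact ((hasDerivAt_pd2 hf).div (hasDerivAt_pd2 hg) hg₀).deriv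

lemma AnalyticAt.pd1_eventuallyEq (hf : AnalyticAt ℂ f u) :
    pd1 f =ᶠ[𝓝 u] fun v => fderiv ℂ f v (1, 0) := by
  filter_upwards [hf.eventually_analyticAt] with v hv
  exact pd1_eq_fderiv hv.differentiableAt

lemma AnalyticAt.pd2_eventuallyEq (hf : AnalyticAt ℂ f u) :
    pd2 f =ᶠ[𝓝 u] fun v => fderiv ℂ f v (0, 1) := by
  filter_upwards [hf.eventually_analyticAt] with v hv
  exact pd2_eq_fderiv hv.differentiableAt

lemma AnalyticAt.pd1 (hf : AnalyticAt ℂ f u) : AnalyticAt ℂ (pd1 f) u :=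
  (((ContinuousLinearMap.apply ℂ ℂ ((1 : ℂ), (0 : ℂ))).analyticAt _).comp hf.fderiv).congr
    hf.pd1_eventuallyEq.symm

lemma AnalyticAt.pd2 (hf : AnalyticAt ℂ f u) : AnalyticAt ℂ (pd2 f) u :=
  (((ContinuousLinearMap.apply ℂ ℂ ((0 : ℂ), (1 : ℂ))).analyticAt _).comp hf.fderiv).congr
    hf.pd2_eventuallyEq.symm

lemma pd1_pd2_comm (hf : AnalyticAt ℂ f u) : pd1 (pd2 f) u = pd2 (pd1 f) u := by
  have hf' : DifferentiableAt ℂ (fderiv ℂ f) u := hf.fderiv.differentiableAt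
  rw [pd1_congr hf.pd2_eventuallyEq, pd2_congr hf.pd1_eventuallyEq,
    pd1_eq_fderiv (hf'.clm_apply (differentiableAt_const _)),
    pd2_eq_fderiv (hf'.clm_apply (differentiableAt_const _)),
    fderiv_clm_apply hf' (differentiableAt_const _),
    fderiv_clm_apply hf' (differentiableAt_const _)]
  simpa using hf.contDiffAt.isSymmSndFDerivAt_of_omega (1, 0) (0, 1)

lemma pd1_pd2_div_self_eq_pd2_pd1_div_self {σ : ℂ × ℂ → ℂ} (hσ : AnalyticAt ℂ σ u)
    (hσ₀ : σ u ≠ 0) :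
    pd1 (fun v => pd2 σ v / σ v) u = pd2 (fun v => pd1 σ v / σ v) u := by
  rw [pd1_div hσ.pd2.differentiableAt hσ.differentiableAt hσ₀,
    pd2_div hσ.pd1.differentiableAt hσ.differentiableAt hσ₀, pd1_pd2_comm hσ]
  ring

lemma AnalyticAt.bakerP22 {σ : ℂ × ℂ → ℂ} (hσ : AnalyticAt ℂ σ u) (hσ₀ : σ u ≠ 0) :
    AnalyticAt ℂ (bakerP22 σ) u :=
  (hσ.pd2.div hσ hσ₀).pd2.neg

lemma AnalyticAt.bakerP21 {σ : ℂ × ℂ → ℂ} (hσ : AnalyticAt ℂ σ u) (hσ₀ : σ u ≠ 0) :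
    AnalyticAt ℂ (bakerP21 σ) u :=
  (hσ.pd1.div hσ hσ₀).pd2.neg

lemma pd2_bakerP21 {σ : ℂ × ℂ → ℂ} (hσ : AnalyticAt ℂ σ u) (hσ₀ : σ u ≠ 0) :
    pd2 (bakerP21 σ) u = pd1 (bakerP22 σ) u := by
  have hmixed : pd1 (fun v => pd2 σ v / σ v) =ᶠ[𝓝 u] pd2 (fun v => pd1 σ v / σ v) := by
    filter_upwards [hσ.eventually_analyticAt, hσ.continuousAt.eventually_ne hσ₀] with v hv hv₀
    exact pd1_pd2_div_self_eq_pd2_pd1_div_self hv hv₀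
  unfold bakerP21 bakerP22
  simp only [pd1_neg, pd2_neg, neg_inj]
  rw [pd1_pd2_comm (f := fun v => pd2 σ v / σ v) (hσ.pd2.div hσ hσ₀), pd2_congr hmixed]

lemma pd2_pd2_pd2_eq_of_eventually_H1 {P R : ℂ × ℂ → ℂ} {c₃ c₄ : ℂ}
    (hP : DifferentiableAt ℂ P u) (hR : DifferentiableAt ℂ R u)
    (hH1 : ∀ᶠ v in 𝓝 u, pd2 (pd2 P) v - 6 * P v ^ 2 = 2 * c₃ + 4 * c₄ * P v + 4 * R v) :
    pd2 (pd2 (pd2 P)) u = 12 * P u * pd2 P u + 4 * c₄ * pd2 P u + 4 * pd2 R u := by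
  have hP' := hasDerivAt_pd2 hP
  have hR' := hasDerivAt_pd2 hR
  rw [pd2_congr (hH1.mono fun v hv => eq_add_of_sub_eq hv), pd2_eq_fderiv hP, pd2_eq_fderiv hR]
  refine ((((hP'.const_mul (4 * c₄)).const_add (2 * c₃)).add (hR'.const_mul 4)).add
    ((hP'.pow 2).const_mul 6)).deriv.trans ?_
  simp only [Prod.mk.eta]
  ring

/-- **KdV equation from Baker's relation (H-1) (equation (4-30)).**
Let `σ` be holomorphic and nowhere vanishing on an open `U ⊆ ℂ²`, let
`℘_{jk} = −∂_j ∂_k log σ`, and suppose Baker's relation (H-1)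
`∂₂²℘₂₂ − 6℘₂₂² = 2λ₃ + 4λ₄℘₂₂ + 4℘₂₁` holds on `U` (the case `λ₅ = 1`).
With `a₂ = −λ₄/3`, the function `q = −2℘₂₂ − λ₄ − a₂` satisfies the KdV-type
equation `−4 ∂₁ q + 6 q ∂₂ q + ∂₂³ q = 0` on `U`. -/
theorem kdv_from_baker_H1 (U : Set (ℂ × ℂ)) (hUopen : IsOpen U)
    (σ : ℂ × ℂ → ℂ) (hσ : AnalyticOnNhd ℂ σ U) (hσne : ∀ u ∈ U, σ u ≠ 0)
    (lam₃ lam₄ : ℂ)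
    (hH1 : ∀ u ∈ U,
      pd2 (pd2 (bakerP22 σ)) u - 6 * (bakerP22 σ u) ^ 2 =
        2 * lam₃ + 4 * lam₄ * bakerP22 σ u + 4 * bakerP21 σ u)
    (a₂ : ℂ) (ha₂ : a₂ = -lam₄ / 3)
    (q : ℂ × ℂ → ℂ) (hq : q = fun u => -2 * bakerP22 σ u - lam₄ - a₂) :
    ∀ u ∈ U,
      -4 * pd1 q u + 6 * q u * pd2 q u + pd2 (pd2 (pd2 q)) u = 0 := by
  intro u hu
  have hP₂₂₂ := pd2_pd2_pd2_eq_of_eventually_H1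
    ((hσ u hu).bakerP22 (hσne u hu)).differentiableAt
    ((hσ u hu).bakerP21 (hσne u hu)).differentiableAt
    (eventually_of_mem (hUopen.mem_nhds hu) hH1)
  subst hq ha₂
  simp only [pd1_sub_const, pd2_sub_const, pd1_const_mul, pd2_const_mul]
  rw [hP₂₂₂, pd2_bakerP21 (hσ u hu) (hσne u hu)]
  ring
end
end
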